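/- arXiv:2409.16481 — 2 statements merged into one kernel-verified Lean document; each statement's English description precedes it below -/
import Mathlib

section
/- For k = 1, the depolarizing A-OTOC G(p,1) = (1 − 3p/2 + 3p²/4) − (1 − 3p/4)² = 3p²/16 is monotonically increasing on [0,1], whereas for k = 3 the function G(p,3) is not monotone on [0,1]: there exists 0 < p₁ < p₂ ≤ 1 with G(p₁,3) > G(p₂,3). -/
open Set

/-- For `k = 1`, `G(p,1) = 3p²/16` and is monotone increasing on `[0,1]`; for `k = 3`,
`G(p,3)` is not monotone on `[0,1]`. Here
`G(p,k) = (1 − 3p/2 + 3p²/4)^k − (1 − 3p/4)^{2k}`. -/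
theorem depolarizing_aotoc_monotonicity :
    (∀ p : ℝ, (1 - 3 * p / 2 + 3 * p ^ 2 / 4) ^ 1 - (1 - 3 * p / 4) ^ (2 * 1)
        = 3 * p ^ 2 / 16) ∧
    MonotoneOn (fun p : ℝ => (1 - 3 * p / 2 + 3 * p ^ 2 / 4) ^ 1 - (1 - 3 * p / 4) ^ (2 * 1))
      (Icc 0 1) ∧
    ∃ p₁ p₂ : ℝ, 0 < p₁ ∧ p₁ < p₂ ∧ p₂ ≤ 1 ∧
      (1 - 3 * p₁ / 2 + 3 * p₁ ^ 2 / 4) ^ 3 - (1 - 3 * p₁ / 4) ^ (2 * 3)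
        > (1 - 3 * p₂ / 2 + 3 * p₂ ^ 2 / 4) ^ 3 - (1 - 3 * p₂ / 4) ^ (2 * 3) := by
  refine ⟨fun p => by ring, ?_, 1/2, 1, by norm_num, by norm_num, le_refl 1, by norm_num⟩
  intro a ha b hb hab
  simp only
  have : ∀ x : ℝ, (1 - 3 * x / 2 + 3 * x ^ 2 / 4) ^ 1 - (1 - 3 * x / 4) ^ (2 * 1)
      = 3 * x ^ 2 / 16 := fun x => by ring
  rw [this, this]
  have := mul_self_le_mul_self ha.1 hab
  nlinarith
end

section
/- For any finite family of operators {K_i} on ℂ^d with Σ_i K_i†K_i = I, the quantity ‖Σ_i K_i ⊗ K_i†‖₂ ≤ d, with equality if and only if the K_i are pairwise linearly dependent (all proportional to a common operator, which is then a multiple of a unitary). -/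
open Matrix Kronecker
open scoped InnerProductSpace ComplexConjugate

noncomputable def eMat {d : ℕ} (A : Matrix (Fin d) (Fin d) ℂ) :
    EuclideanSpace ℂ (Fin d × Fin d) :=
  WithLp.toLp 2 (fun p : Fin d × Fin d => A p.1 p.2)

lemma eMat_inj {d : ℕ} {A B : Matrix (Fin d) (Fin d) ℂ} (h : eMat A = eMat B) : A = B := by
  ext i j; exact congrArg (fun v => v (i, j)) h

lemma eMat_smul {d : ℕ} (α : ℂ) (A : Matrix (Fin d) (Fin d) ℂ) :
    eMat (α • A) = α • eMat A := by
  ext p; simp [eMat]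

lemma eMat_zero {d : ℕ} : eMat (0 : Matrix (Fin d) (Fin d) ℂ) = 0 := by
  ext p; simp [eMat]

lemma inner_eMat {d : ℕ} (A B : Matrix (Fin d) (Fin d) ℂ) :
    ⟪eMat A, eMat B⟫_ℂ = (Aᴴ * B).trace := by
  rw [PiLp.inner_apply]
  simp only [RCLike.inner_apply, eMat, Matrix.trace, Matrix.diag,
    Matrix.mul_apply, Matrix.conjTranspose_apply, Fintype.sum_prod_type]
  rw [Finset.sum_comm]
  exact Finset.sum_congr rfl fun _ _ => Finset.sum_congr rfl fun _ _ => by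
    rw [starRingEnd_apply, mul_comm]

lemma kron_conjT {d : ℕ} (A B : Matrix (Fin d) (Fin d) ℂ) : (A ⊗ₖ B)ᴴ = Aᴴ ⊗ₖ Bᴴ := by
  ext ⟨i, j⟩ ⟨k, l⟩
  simp [Matrix.conjTranspose_apply, Matrix.kroneckerMap_apply, mul_comm]

lemma trace_term {d : ℕ} (A B : Matrix (Fin d) (Fin d) ℂ) :
    ((A ⊗ₖ Aᴴ)ᴴ * (B ⊗ₖ Bᴴ)).trace = (Aᴴ * B).trace * conj ((Aᴴ * B).trace) := by
  rw [kron_conjT, conjTranspose_conjTranspose, ← mul_kronecker_mul, trace_kronecker]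
  congr 1
  rw [starRingEnd_apply, ← Matrix.trace_conjTranspose, Matrix.conjTranspose_mul,
    conjTranspose_conjTranspose, Matrix.trace_mul_comm]

lemma trace_expand {d n : ℕ} (K : Fin n → Matrix (Fin d) (Fin d) ℂ) :
    (((∑ i, K i ⊗ₖ (K i)ᴴ)ᴴ * (∑ i, K i ⊗ₖ (K i)ᴴ)).trace).re =
      ∑ i, ∑ j, ‖⟪eMat (K i), eMat (K j)⟫_ℂ‖ ^ 2 := by
  rw [Matrix.conjTranspose_sum, Finset.sum_mul_sum]
  simp only [Matrix.trace_sum, trace_term, Complex.re_sum]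
  refine Finset.sum_congr rfl fun i _ => Finset.sum_congr rfl fun j _ => ?_
  rw [inner_eMat, Complex.mul_conj]
  simp [Complex.sq_norm]

/-- For Kraus operators on `ℂ^d` with `∑ i, (K i)ᴴ * K i = 1`, the Hilbert–Schmidt
norm of `X = ∑ i, K i ⊗ₖ (K i)ᴴ` is at most `d`, with equality iff all the `K i` are
proportional to a common operator (which is then a multiple of a unitary). -/
theorem hs_norm_natural_rep_le_dim
    {d n : ℕ} (K : Fin n → Matrix (Fin d) (Fin d) ℂ)
    (hK : ∑ i, (K i)ᴴ * K i = 1) :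
    (Real.sqrt ((((∑ i, K i ⊗ₖ (K i)ᴴ)ᴴ * (∑ i, K i ⊗ₖ (K i)ᴴ)).trace).re) ≤ d) ∧
    ((Real.sqrt ((((∑ i, K i ⊗ₖ (K i)ᴴ)ᴴ * (∑ i, K i ⊗ₖ (K i)ᴴ)).trace).re) = d) ↔
      ∃ K₀ : Matrix (Fin d) (Fin d) ℂ,
        (∀ i, ∃ α : ℂ, K i = α • K₀) ∧
        ∃ c : ℂ, ∃ V ∈ Matrix.unitaryGroup (Fin d) ℂ, K₀ = c • (V : Matrix (Fin d) (Fin d) ℂ)) := by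
  set T := (((∑ i, K i ⊗ₖ (K i)ᴴ)ᴴ * (∑ i, K i ⊗ₖ (K i)ᴴ)).trace).re with hTdef
  have hTexp : T = ∑ i, ∑ j, ‖⟪eMat (K i), eMat (K j)⟫_ℂ‖ ^ 2 := trace_expand K
  have hnormsq : ∀ i, ‖eMat (K i)‖ ^ 2 = (((K i)ᴴ * K i).trace).re := by
    intro i
    have h := inner_eMat (K i) (K i)
    rw [inner_self_eq_norm_sq_to_K (𝕜 := ℂ)] at h
    rw [← h]
    norm_cast
  have hsum : ∑ i, ‖eMat (K i)‖ ^ 2 = (d : ℝ) := by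
    simp_rw [hnormsq]
    rw [← Complex.re_sum, ← Matrix.trace_sum, hK, Matrix.trace_one]
    simp
  have hCS : ∀ i j, ‖⟪eMat (K i), eMat (K j)⟫_ℂ‖ ^ 2 ≤ ‖eMat (K i)‖ ^ 2 * ‖eMat (K j)‖ ^ 2 := by
    intro i j
    have h := norm_inner_le_norm (𝕜 := ℂ) (eMat (K i)) (eMat (K j))
    calc ‖⟪eMat (K i), eMat (K j)⟫_ℂ‖ ^ 2 ≤ (‖eMat (K i)‖ * ‖eMat (K j)‖) ^ 2 := by
          exact pow_le_pow_left₀ (norm_nonneg _) h 2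
      _ = ‖eMat (K i)‖ ^ 2 * ‖eMat (K j)‖ ^ 2 := by ring
  have hT0 : 0 ≤ T := by rw [hTexp]; positivity
  have hTle : T ≤ (d : ℝ) ^ 2 := by
    rw [hTexp]
    calc ∑ i, ∑ j, ‖⟪eMat (K i), eMat (K j)⟫_ℂ‖ ^ 2
        ≤ ∑ i, ∑ j, ‖eMat (K i)‖ ^ 2 * ‖eMat (K j)‖ ^ 2 :=
          Finset.sum_le_sum fun i _ => Finset.sum_le_sum fun j _ => hCS i j
      _ = (∑ i, ‖eMat (K i)‖ ^ 2) * (∑ j, ‖eMat (K j)‖ ^ 2) := (Finset.sum_mul_sum _ _ _ _).symm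
      _ = (d : ℝ) ^ 2 := by rw [hsum]; ring
  have hle : Real.sqrt T ≤ d := by
    calc Real.sqrt T ≤ Real.sqrt ((d : ℝ) ^ 2) := Real.sqrt_le_sqrt hTle
      _ = d := Real.sqrt_sq (by positivity)
  have hiff : Real.sqrt T = d ↔ T = (d : ℝ) ^ 2 := by
    constructor
    · intro h
      rw [← Real.sq_sqrt hT0, h]
    · intro h
      rw [h, Real.sqrt_sq (by positivity)]
  refine ⟨hle, ?_⟩
  rcases Nat.eq_zero_or_pos d with hd | hd
  · subst hd
    haveI : IsEmpty (Fin 0) := inferInstance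
    haveI := Matrix.subsingleton_of_empty_left (m := Fin 0) (n := Fin 0) (α := ℂ)
    constructor
    · intro _
      exact ⟨1, fun i => ⟨0, Subsingleton.elim _ _⟩, 1,
        1, Submonoid.one_mem _, (one_smul ℂ _).symm⟩
    · intro _
      have hT0' : T = 0 := by
        rw [hTdef]
        simp [Matrix.trace]
      rw [hT0', Real.sqrt_zero]; simp
  -- main case d > 0
  constructor
  · intro heq
    have hTeq : T = (d : ℝ) ^ 2 := hiff.1 heq
    have key : ∀ i j, ‖⟪eMat (K i), eMat (K j)⟫_ℂ‖ ^ 2 = ‖eMat (K i)‖ ^ 2 * ‖eMat (K j)‖ ^ 2 := by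
      have htot : ∑ i, ∑ j, ‖⟪eMat (K i), eMat (K j)⟫_ℂ‖ ^ 2
          = ∑ i, ∑ j, ‖eMat (K i)‖ ^ 2 * ‖eMat (K j)‖ ^ 2 := by
        rw [← hTexp, hTeq, ← hsum, sq, Finset.sum_mul_sum]
      have hrow := (Finset.sum_eq_sum_iff_of_le
        (fun i _ => Finset.sum_le_sum fun j _ => hCS i j)).1 htot
      intro i j
      exact (Finset.sum_eq_sum_iff_of_le (fun j _ => hCS i j)).1
        (hrow i (Finset.mem_univ i)) j (Finset.mem_univ j)
    have keynorm : ∀ i j, ‖⟪eMat (K i), eMat (K j)⟫_ℂ‖ = ‖eMat (K i)‖ * ‖eMat (K j)‖ := by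
      intro i j
      have := key i j
      rw [← mul_pow] at this
      exact (sq_eq_sq₀ (norm_nonneg _) (mul_nonneg (norm_nonneg _) (norm_nonneg _))).1 this
    have hne : ∃ i₀, K i₀ ≠ 0 := by
      by_contra h
      push_neg at h
      have h1 : (0 : Matrix (Fin d) (Fin d) ℂ) = 1 := by
        rw [← hK]; simp [h]
      have h2 := congrArg Matrix.trace h1
      rw [Matrix.trace_zero, Matrix.trace_one, Fintype.card_fin] at h2
      exact Nat.cast_ne_zero.mpr hd.ne' h2.symm
    obtain ⟨i₀, hi₀⟩ := hne
    have hprop : ∀ i, ∃ α : ℂ, K i = α • K i₀ := by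
      intro i
      by_cases h0 : K i = 0
      · exact ⟨0, by simp [h0]⟩
      · have hx : eMat (K i₀) ≠ 0 := fun h => hi₀ (eMat_inj (by rw [h, ← eMat_zero]))
        have hy : eMat (K i) ≠ 0 := fun h => h0 (eMat_inj (by rw [h, ← eMat_zero]))
        obtain ⟨r, _, hsmul⟩ :=
          (norm_inner_eq_norm_iff (𝕜 := ℂ) hx hy).1 (keynorm i₀ i)
        exact ⟨r, eMat_inj (by rw [hsmul, ← eMat_smul])⟩
    refine ⟨K i₀, hprop, ?_⟩
    choose α hα using hprop
    set s : ℝ := ∑ i, Complex.normSq (α i) with hs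
    have hKs : (s : ℂ) • ((K i₀)ᴴ * K i₀) = 1 := by
      rw [← hK]
      have : ∀ i : Fin n, (K i)ᴴ * K i = (Complex.normSq (α i) : ℂ) • ((K i₀)ᴴ * K i₀) := by
        intro i
        rw [hα i, Matrix.conjTranspose_smul, Matrix.smul_mul, Matrix.mul_smul,
          smul_smul, Complex.normSq_eq_conj_mul_self]
        rfl
      rw [Finset.sum_congr rfl fun i _ => this i, ← Finset.sum_smul]
      congr 1
      push_cast [hs]
      ring
    have hs0 : s ≠ 0 := by
      intro h
      rw [h] at hKs
      simp only [Complex.ofReal_zero, zero_smul] at hKs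
      have h2 := congrArg Matrix.trace hKs
      rw [Matrix.trace_zero, Matrix.trace_one, Fintype.card_fin] at h2
      exact Nat.cast_ne_zero.mpr hd.ne' h2.symm
    have hsnn : 0 ≤ s := Finset.sum_nonneg fun i _ => Complex.normSq_nonneg _
    have hsq : Real.sqrt s ≠ 0 := Real.sqrt_ne_zero'.2 (lt_of_le_of_ne hsnn (Ne.symm hs0))
    refine ⟨(((Real.sqrt s)⁻¹ : ℝ) : ℂ), ((Real.sqrt s : ℝ) : ℂ) • K i₀, ?_, ?_⟩
    · rw [Matrix.mem_unitaryGroup_iff']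
      show (((Real.sqrt s : ℝ) : ℂ) • K i₀)ᴴ * (((Real.sqrt s : ℝ) : ℂ) • K i₀) = 1
      rw [Matrix.conjTranspose_smul, Matrix.smul_mul, Matrix.mul_smul, smul_smul]
      rw [Complex.star_def, Complex.conj_ofReal, ← Complex.ofReal_mul, Real.mul_self_sqrt hsnn]
      exact hKs
    · rw [smul_smul, ← Complex.ofReal_mul, inv_mul_cancel₀ hsq]
      simp
  · rintro ⟨K₀, hprop, _, _, _, _⟩
    choose α hα using hprop
    have key : ∀ i j, ‖⟪eMat (K i), eMat (K j)⟫_ℂ‖ ^ 2 = ‖eMat (K i)‖ ^ 2 * ‖eMat (K j)‖ ^ 2 := by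
      intro i j
      rw [hα i, hα j, eMat_smul, eMat_smul, inner_smul_left, inner_smul_right,
        inner_self_eq_norm_sq_to_K (𝕜 := ℂ)]
      rw [norm_smul, norm_smul]
      simp only [norm_mul, RCLike.norm_conj, norm_pow, RCLike.norm_ofReal, abs_norm]
      ring
    apply hiff.2
    rw [hTexp]
    calc ∑ i, ∑ j, ‖⟪eMat (K i), eMat (K j)⟫_ℂ‖ ^ 2
        = ∑ i, ∑ j, ‖eMat (K i)‖ ^ 2 * ‖eMat (K j)‖ ^ 2 := by
          exact Finset.sum_congr rfl fun i _ => Finset.sum_congr rfl fun j _ => key i j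
      _ = (∑ i, ‖eMat (K i)‖ ^ 2) * (∑ j, ‖eMat (K j)‖ ^ 2) := (Finset.sum_mul_sum _ _ _ _).symm
      _ = (d : ℝ) ^ 2 := by rw [hsum]; ring
end
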